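/- For every integer q ≥ 3 and θ = 1 − 1/q, the function α_EP on [0,θ], defined by α_EP(x) = 1 − H_q(θ − √(θ² − xθ)) for x ∈ [0, (2q−3)/(q(q−1))] and α_EP(x) = (θ − x)(q−1)log_q(q−1)/(q−2) for x ∈ [(2q−3)/(q(q−1)), θ], is convex on [0,θ], continuously differentiable on (0,θ), and satisfies α_EP(x) ≤ α_E(x) := 1 − H_q(θ(1 − √(1 − x/θ))) (the Elias bound) and α_EP(x) ≤ 1 − x/θ (the Plotkin bound) for all x ∈ [0,θ]. -/

import Mathlib

open Filter Real Set

/-- The q-ary entropy function. -/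
noncomputable def qEntropy (q : ℕ) (x : ℝ) : ℝ :=
  x * Real.logb q (((q : ℝ) - 1) / x) + (1 - x) * Real.logb q (1 / (1 - x))

/-- The Elias bound `α_E` (with `θ = 1 - 1/q`). -/
noncomputable def alphaE (q : ℕ) (x : ℝ) : ℝ :=
  1 - qEntropy q ((1 - 1 / (q : ℝ)) * (1 - Real.sqrt (1 - x / (1 - 1 / (q : ℝ)))))

/-- The hybrid Elias-Plotkin bound `α_EP` (with `θ = 1 - 1/q`). -/
noncomputable def alphaEP (q : ℕ) (x : ℝ) : ℝ :=
  if x ≤ (2 * (q : ℝ) - 3) / ((q : ℝ) * ((q : ℝ) - 1)) then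
    1 - qEntropy q ((1 - 1 / (q : ℝ)) -
      Real.sqrt ((1 - 1 / (q : ℝ)) ^ 2 - x * (1 - 1 / (q : ℝ))))
  else ((1 - 1 / (q : ℝ)) - x) * (((q : ℝ) - 1) * Real.logb q ((q : ℝ) - 1) / ((q : ℝ) - 2))

/-!
Write `y = θ - √(θ² - xθ)` (`eliasPoint`) for the argument of `H_q` in the Elias branch and
`t = (q-1)(1-y)/y` (`oddsRatio`) for its odds ratio. The derivative of the Elias branch is
`-h(t) / (2 ln q)` with `h(t) = (t + q - 1) ln t / (t - 1)` (`eliasDerivProfile`), and `h`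
increases on `t ≥ (q-1)²` because there `q t ln t ≤ (t - 1)(t + q - 1)`, a consequence of
`2 ln s ≤ s - 1/s`. On `[0, x*]` we have `y ≤ 1/q`, i.e. `t ≥ (q-1)²`, so this derivative
increases; at `x*` (`crossover`) it equals the slope of the Plotkin segment, which meets the Elias
branch there. Hence `α_EP` has a continuous nondecreasing derivative on `(0, θ)`: it is `C¹` and
convex, and convexity together with `α_EP(0) = 1`, `α_EP(θ) = 0` gives the Plotkin bound.

On the segment, `α_E - α_EP = F(y) = 1 - H_q(y) - K (θ - y)²` (`plotkinGap`, `K = plotkinCoeff`)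
with `y ∈ [1/q, θ]`. Both `F` and `F'` vanish at `1/q` and at `θ`, and
`F'' = 1/(y(1-y) ln q) - 2K` is `≥ 0`, `≤ 0`, `≥ 0` on three consecutive subintervals, because
`y(1-y)` is symmetric about `1/2` and so is `[1/q, θ]`. Hence `F` increases, is concave, then
decreases, and stays nonnegative.
-/

section Calculus

variable {f f' f'' g h g' h' : ℝ → ℝ} {a b c : ℝ}

theorem monotoneOn_Icc_of_hasDerivAt_nonneg (hf : ∀ x ∈ Icc a b, HasDerivAt f (f' x) x)
    (hf' : ∀ x ∈ Ioo a b, 0 ≤ f' x) : MonotoneOn f (Icc a b) :=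
  monotoneOn_of_hasDerivWithinAt_nonneg (convex_Icc a b)
    (fun x hx => (hf x hx).continuousAt.continuousWithinAt)
    (fun x hx => (hf x (interior_subset hx)).hasDerivWithinAt) (by simpa using hf')

theorem antitoneOn_Icc_of_hasDerivAt_nonpos (hf : ∀ x ∈ Icc a b, HasDerivAt f (f' x) x)
    (hf' : ∀ x ∈ Ioo a b, f' x ≤ 0) : AntitoneOn f (Icc a b) :=
  antitoneOn_of_hasDerivWithinAt_nonpos (convex_Icc a b)
    (fun x hx => (hf x hx).continuousAt.continuousWithinAt)
    (fun x hx => (hf x (interior_subset hx)).hasDerivWithinAt) (by simpa using hf')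

theorem monotoneOn_Icc_of_deriv2_nonneg (hf : ∀ x ∈ Icc a b, HasDerivAt f (f' x) x)
    (hf' : ∀ x ∈ Icc a b, HasDerivAt f' (f'' x) x) (hf'' : ∀ x ∈ Ioo a b, 0 ≤ f'' x)
    (ha : 0 ≤ f' a) : MonotoneOn f (Icc a b) := by
  have hmono := monotoneOn_Icc_of_hasDerivAt_nonneg hf' hf''
  refine monotoneOn_Icc_of_hasDerivAt_nonneg hf fun x hx => ha.trans ?_
  exact hmono (left_mem_Icc.2 (hx.1.trans hx.2).le) (Ioo_subset_Icc_self hx) hx.1.le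

theorem antitoneOn_Icc_of_deriv2_nonneg (hf : ∀ x ∈ Icc a b, HasDerivAt f (f' x) x)
    (hf' : ∀ x ∈ Icc a b, HasDerivAt f' (f'' x) x) (hf'' : ∀ x ∈ Ioo a b, 0 ≤ f'' x)
    (hb : f' b ≤ 0) : AntitoneOn f (Icc a b) := by
  have hmono := monotoneOn_Icc_of_hasDerivAt_nonneg hf' hf''
  refine antitoneOn_Icc_of_hasDerivAt_nonpos hf fun x hx => le_trans ?_ hb
  exact hmono (Ioo_subset_Icc_self hx) (right_mem_Icc.2 (hx.1.trans hx.2).le) hx.2.le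

theorem nonneg_of_deriv2_nonneg_nonpos_nonneg {y₁ y₂ : ℝ} (h₁ : a ≤ y₁) (h₁₂ : y₁ ≤ y₂)
    (h₂ : y₂ ≤ b) (hf : ∀ x ∈ Icc a b, HasDerivAt f (f' x) x)
    (hf' : ∀ x ∈ Icc a b, HasDerivAt f' (f'' x) x) (hleft : ∀ x ∈ Ioo a y₁, 0 ≤ f'' x)
    (hmid : ∀ x ∈ Ioo y₁ y₂, f'' x ≤ 0) (hright : ∀ x ∈ Ioo y₂ b, 0 ≤ f'' x)
    (ha : 0 ≤ f a) (ha' : 0 ≤ f' a) (hb : 0 ≤ f b) (hb' : f' b ≤ 0) :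
    ∀ x ∈ Icc a b, 0 ≤ f x := by
  have sub {s t : ℝ} (hs : a ≤ s) (ht : t ≤ b) : Icc s t ⊆ Icc a b := Icc_subset_Icc hs ht
  have hmono : MonotoneOn f (Icc a y₁) :=
    monotoneOn_Icc_of_deriv2_nonneg (fun x hx => hf x (sub le_rfl (h₁₂.trans h₂) hx))
      (fun x hx => hf' x (sub le_rfl (h₁₂.trans h₂) hx)) hleft ha'
  have hanti : AntitoneOn f (Icc y₂ b) :=
    antitoneOn_Icc_of_deriv2_nonneg (fun x hx => hf x (sub (h₁.trans h₁₂) le_rfl hx))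
      (fun x hx => hf' x (sub (h₁.trans h₁₂) le_rfl hx)) hright hb'
  have hconc : ConcaveOn ℝ (Icc y₁ y₂) f := by
    refine concaveOn_of_hasDerivWithinAt2_nonpos (convex_Icc y₁ y₂)
      (fun x hx => (hf x (sub h₁ h₂ hx)).continuousAt.continuousWithinAt)
      (fun x hx => (hf x (sub h₁ h₂ (interior_subset hx))).hasDerivWithinAt)
      (fun x hx => (hf' x (sub h₁ h₂ (interior_subset hx))).hasDerivWithinAt) ?_
    simpa using hmid
  have hy₁ : 0 ≤ f y₁ := ha.trans (hmono (left_mem_Icc.2 h₁) (right_mem_Icc.2 h₁) h₁)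
  have hy₂ : 0 ≤ f y₂ := hb.trans (hanti (left_mem_Icc.2 h₂) (right_mem_Icc.2 h₂) h₂)
  intro x hx
  rcases le_total x y₁ with hx₁ | hx₁
  · exact ha.trans (hmono (left_mem_Icc.2 h₁) ⟨hx.1, hx₁⟩ hx.1)
  rcases le_total x y₂ with hx₂ | hx₂
  · exact le_min hy₁ hy₂ |>.trans
      (hconc.min_le_of_mem_Icc (left_mem_Icc.2 h₁₂) (right_mem_Icc.2 h₁₂) ⟨hx₁, hx₂⟩)
  · exact hb.trans (hanti ⟨hx₂, hx.2⟩ (right_mem_Icc.2 h₂) hx.2)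

theorem hasDerivAt_ite_le (hg : ∀ x ∈ Ioc a c, HasDerivAt g (g' x) x)
    (hh : ∀ x ∈ Ico c b, HasDerivAt h (h' x) x) (hc : g c = h c) (hc' : g' c = h' c)
    {x : ℝ} (hx : x ∈ Ioo a b) :
    HasDerivAt (fun x => if x ≤ c then g x else h x) (if x ≤ c then g' x else h' x) x := by
  rcases lt_trichotomy x c with hxc | rfl | hxc
  · rw [if_pos hxc.le]
    refine (hg x ⟨hx.1, hxc.le⟩).congr_of_eventuallyEq ?_
    filter_upwards [Iio_mem_nhds hxc] with z hz using if_pos (le_of_lt hz)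
  · rw [if_pos le_rfl]
    have hleft : HasDerivWithinAt (fun z => if z ≤ x then g z else h z) (g' x) (Iic x) x :=
      (hg x ⟨hx.1, le_rfl⟩).hasDerivWithinAt.congr (fun z hz => if_pos hz) (if_pos le_rfl)
    have hright : HasDerivWithinAt (fun z => if z ≤ x then g z else h z) (g' x) (Ici x) x := by
      refine hc' ▸ (hh x ⟨le_rfl, hx.2⟩).hasDerivWithinAt.congr (fun z hz => ?_) (by simp [hc])
      split_ifs with hzx
      · rw [le_antisymm hzx hz, hc]
      · rfl
    simpa [Iic_union_Ici] using hleft.union hright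
  · rw [if_neg (not_le.2 hxc)]
    refine (hh x ⟨hxc.le, hx.2⟩).congr_of_eventuallyEq ?_
    filter_upwards [Ioi_mem_nhds hxc] with z hz using if_neg (not_le.2 hz)

theorem continuousOn_ite_le (hg : ContinuousOn g (Ioc a c)) (hh : ContinuousOn h (Ico c b))
    (hc : g c = h c) : ContinuousOn (fun x => if x ≤ c then g x else h x) (Ioo a b) := by
  refine ContinuousOn.if ?_ (hg.mono ?_) (hh.mono ?_)
  · rintro x ⟨-, hx⟩
    rw [show {x : ℝ | x ≤ c} = Iic c from rfl, frontier_Iic] at hx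
    rw [hx]; exact hc
  · rintro x ⟨hx, hxc⟩
    rw [show {x : ℝ | x ≤ c} = Iic c from rfl, closure_Iic] at hxc
    exact ⟨hx.1, hxc⟩
  · rintro x ⟨hx, hxc⟩
    simp only [not_le] at hxc
    rw [show {x : ℝ | c < x} = Ioi c from rfl, closure_Ioi] at hxc
    exact ⟨hxc, hx.2⟩

theorem monotoneOn_ite_le (hg : MonotoneOn g (Ioc a c)) (hh : MonotoneOn h (Ico c b))
    (hc : g c ≤ h c) : MonotoneOn (fun x => if x ≤ c then g x else h x) (Ioo a b) := by
  intro x hx y hy hxy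
  by_cases hyc : y ≤ c
  · simp only [if_pos (hxy.trans hyc), if_pos hyc]
    exact hg ⟨hx.1, hxy.trans hyc⟩ ⟨hy.1, hyc⟩ hxy
  rw [not_le] at hyc
  simp only [if_neg (not_le.2 hyc)]
  split_ifs with hxc
  · exact (hg ⟨hx.1, hxc⟩ ⟨hx.1.trans_le hxc, le_rfl⟩ hxc).trans
      (hc.trans (hh ⟨le_rfl, hyc.trans hy.2⟩ ⟨hyc.le, hy.2⟩ hyc.le))
  · exact hh ⟨(not_le.1 hxc).le, hx.2⟩ ⟨hyc.le, hy.2⟩ hxy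

theorem convexOn_Icc_of_hasDerivAt_of_monotoneOn (hf : ContinuousOn f (Icc a b))
    (hf' : ∀ x ∈ Ioo a b, HasDerivAt f (f' x) x) (hmono : MonotoneOn f' (Ioo a b)) :
    ConvexOn ℝ (Icc a b) f := by
  refine MonotoneOn.convexOn_of_deriv (convex_Icc a b) hf ?_ ?_ <;> rw [interior_Icc]
  · exact fun x hx => (hf' x hx).differentiableAt.differentiableWithinAt
  · exact hmono.congr fun x hx => ((hf' x hx).deriv).symm

theorem contDiffOn_one_of_hasDerivAt {s : Set ℝ} (hs : IsOpen s)
    (hf : ∀ x ∈ s, HasDerivAt f (f' x) x) (hf' : ContinuousOn f' s) : ContDiffOn ℝ 1 f s := by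
  rw [show (1 : WithTop ℕ∞) = 0 + 1 from rfl, contDiffOn_succ_iff_deriv_of_isOpen hs]
  refine ⟨fun x hx => (hf x hx).differentiableAt.differentiableWithinAt, by simp, ?_⟩
  exact contDiffOn_zero.2 (hf'.congr fun x hx => (hf x hx).deriv)

end Calculus

namespace EliasPlotkin

theorem two_mul_log_le_sub_inv {s : ℝ} (hs : 1 ≤ s) : 2 * log s ≤ s - s⁻¹ := by
  have := self_le_sinh_iff.2 (log_nonneg hs)
  rwa [sinh_log (by linarith), le_div_iff₀ two_pos, mul_comm] at this

theorem mul_mul_log_le {Q t : ℝ} (hQ : 2 ≤ Q) (ht : (Q - 1) ^ 2 ≤ t) :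
    Q * (t * log t) ≤ (t - 1) * (t + Q - 1) := by
  obtain ⟨u, hu0, rfl⟩ : ∃ u, 0 ≤ u ∧ t = u ^ 2 :=
    ⟨√t, sqrt_nonneg t, (sq_sqrt ((sq_nonneg _).trans ht)).symm⟩
  have hu : Q - 1 ≤ u := abs_le_of_sq_le_sq' ht hu0 |>.2
  have hu1 : 1 ≤ u := by linarith
  have hlog : u ^ 2 * log (u ^ 2) ≤ u * (u ^ 2 - 1) := by
    have h := two_mul_log_le_sub_inv hu1
    have : u * (u - u⁻¹) = u ^ 2 - 1 := by field_simp
    rw [log_pow]; push_cast; nlinarith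
  calc Q * (u ^ 2 * log (u ^ 2)) ≤ Q * (u * (u ^ 2 - 1)) := by gcongr
    _ ≤ (u ^ 2 - 1) * (u ^ 2 + Q - 1) := by
      nlinarith [mul_nonneg (mul_nonneg (sub_nonneg.2 hu1) (sub_nonneg.2 hu1))
        (sub_nonneg.2 hu), mul_nonneg (sub_nonneg.2 hu1) (sub_nonneg.2 hu)]

noncomputable def eliasDerivProfile (Q t : ℝ) : ℝ := (t + Q - 1) * log t / (t - 1)

theorem monotoneOn_eliasDerivProfile {Q : ℝ} (hQ : 2 < Q) :
    MonotoneOn (eliasDerivProfile Q) (Ici ((Q - 1) ^ 2)) := by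
  have hone : 1 < (Q - 1) ^ 2 := by nlinarith
  have hpos {t : ℝ} (ht : t ∈ Ici ((Q - 1) ^ 2)) : 1 < t := hone.trans_le ht
  refine monotoneOn_of_hasDerivWithinAt_nonneg (convex_Ici _) (f' := fun t =>
      ((t - 1) * (t + Q - 1) - Q * (t * log t)) / (t * (t - 1) ^ 2)) ?_ ?_ ?_
  · intro t ht
    have ht0 : t ≠ 0 := by linarith [hpos ht]
    have ht1 : t - 1 ≠ 0 := by linarith [hpos ht]
    refine ContinuousAt.continuousWithinAt ?_
    unfold eliasDerivProfile
    fun_prop (disch := assumption)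
  · intro t ht
    rw [interior_Ici] at ht
    have ht1 := hpos (mem_Ici_of_Ioi ht)
    have hn : HasDerivAt (fun t => t + Q - 1) 1 t := by
      simpa using ((hasDerivAt_id' t).add_const Q).sub_const 1
    have hd : HasDerivAt (eliasDerivProfile Q) _ t :=
      (hn.mul (hasDerivAt_log (by positivity))).div ((hasDerivAt_id' t).sub_const 1) (by linarith)
    have ht1' : t - 1 ≠ 0 := by linarith
    exact (hd.congr_deriv (by simp only [Pi.mul_apply]; field_simp; ring)).hasDerivWithinAt
  · intro t ht
    rw [interior_Ici] at ht
    have := hpos (mem_Ici_of_Ioi ht)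
    exact div_nonneg (sub_nonneg.2 (mul_mul_log_le hQ.le (le_of_lt ht))) (by positivity)

theorem mul_one_sub_le_of_sqrt_le_abs {m y : ℝ} (h : √(1 / 4 - m) ≤ |y - 1 / 2|) :
    y * (1 - y) ≤ m := by
  rcases le_or_gt (1 / 4 - m) 0 with hm | hm
  · nlinarith [sq_nonneg (y - 1 / 2)]
  · have := (sqrt_le_left (abs_nonneg _)).1 h
    rw [sq_abs] at this
    nlinarith

theorem lt_mul_one_sub_of_abs_lt_sqrt {m y : ℝ} (h : |y - 1 / 2| < √(1 / 4 - m)) :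
    m < y * (1 - y) := by
  have := (lt_sqrt (abs_nonneg _)).1 h
  rw [sq_abs] at this
  nlinarith

section Entropy

variable {q : ℕ} {y : ℝ}

noncomputable def qEntropyDeriv (q : ℕ) (y : ℝ) : ℝ := (log (q - 1) + log (1 - y) - log y) / log q

theorem qEntropy_eq_qaryEntropy_div_log (hq : q ≠ 1) (y : ℝ) :
    qEntropy q y = qaryEntropy q y / log q := by
  have hq1 : (q : ℝ) - 1 ≠ 0 := sub_ne_zero.2 (by exact_mod_cast hq)
  rcases eq_or_ne y 0 with rfl | hy
  · simp [qEntropy]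
  · simp only [qEntropy, qaryEntropy, binEntropy, logb, one_div]
    rw [div_eq_mul_inv ((q : ℝ) - 1), log_mul hq1 (inv_ne_zero hy)]
    push_cast
    ring

theorem continuous_qEntropy (hq : q ≠ 1) : Continuous (qEntropy q) := by
  simp only [funext (qEntropy_eq_qaryEntropy_div_log hq)]
  exact qaryEntropy_continuous.div_const _

theorem hasDerivAt_qEntropy (hq : q ≠ 1) (h0 : 0 < y) (h1 : y < 1) :
    HasDerivAt (qEntropy q) (qEntropyDeriv q y) y := by
  simp only [funext (qEntropy_eq_qaryEntropy_div_log hq)]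
  exact (hasDerivAt_qaryEntropy h0.ne' h1.ne).div_const _

theorem hasDerivAt_qEntropyDeriv (q : ℕ) (h0 : 0 < y) (h1 : y < 1) :
    HasDerivAt (qEntropyDeriv q) (-1 / (y * (1 - y)) / log q) y := by
  have h1' : 1 - y ≠ 0 := by linarith
  have hd := (((hasDerivAt_const y (log ((q : ℝ) - 1))).add
    (((hasDerivAt_id' y).const_sub 1).log h1')).sub (hasDerivAt_log h0.ne')).div_const (log q)
  exact hd.congr_deriv (by field_simp; ring)

theorem qEntropy_zero (q : ℕ) : qEntropy q 0 = 0 := by simp [qEntropy]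

end Entropy

section Parameters

variable (q : ℕ)

noncomputable def theta : ℝ := 1 - 1 / q

noncomputable def crossover : ℝ := (2 * q - 3) / (q * (q - 1))

noncomputable def plotkinSlope : ℝ := (q - 1) * logb q (q - 1) / (q - 2)

noncomputable def plotkinCoeff : ℝ := q * log (q - 1) / ((q - 2) * log q)

noncomputable def eliasPoint (x : ℝ) : ℝ := theta q - √(theta q ^ 2 - x * theta q)

noncomputable def eliasBranch (x : ℝ) : ℝ := 1 - qEntropy q (eliasPoint q x)

noncomputable def plotkinLine (x : ℝ) : ℝ := (theta q - x) * plotkinSlope q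

theorem alphaEP_eq_ite :
    alphaEP q = fun x => if x ≤ crossover q then eliasBranch q x else plotkinLine q x := rfl

end Parameters

section EliasPoint

variable {q : ℕ} {x : ℝ}

theorem theta_nonneg (q : ℕ) : 0 ≤ theta q := by
  rcases q.eq_zero_or_pos with rfl | hq
  · simp [theta]
  · have : (1 : ℝ) / q ≤ 1 := div_le_one_of_le₀ (by exact_mod_cast hq) (Nat.cast_nonneg q)
    simp only [theta]; linarith

theorem theta_pos (hq : 2 ≤ q) : 0 < theta q := by
  have : (1 : ℝ) / q < 1 := (div_lt_one (by positivity)).2 (by exact_mod_cast hq)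
  simp only [theta]; linarith

theorem theta_lt_one (hq : q ≠ 0) : theta q < 1 := by
  simp only [theta]; have : (0 : ℝ) < 1 / q := by positivity
  linarith

theorem theta_eq (hq : q ≠ 0) : theta q = (q - 1) / q := by
  simp only [theta]; field_simp

theorem alphaE_eq_eliasBranch (q : ℕ) (x : ℝ) : alphaE q x = eliasBranch q x := by
  have hsq : theta q ^ 2 - x * theta q = theta q ^ 2 * (1 - x / theta q) := by
    rcases eq_or_ne (theta q) 0 with h | h
    · simp [h]
    · field_simp
  rw [alphaE, eliasBranch, eliasPoint, hsq, sqrt_mul (sq_nonneg _), sqrt_sq (theta_nonneg q)]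
  simp only [theta]; ring_nf

theorem sq_theta_sub_eliasPoint (hx : x ≤ theta q) :
    (theta q - eliasPoint q x) ^ 2 = theta q ^ 2 - x * theta q := by
  rw [eliasPoint, sub_sub_cancel, sq_sqrt]
  nlinarith [theta_nonneg q]

theorem monotone_eliasPoint (q : ℕ) : Monotone (eliasPoint q) := fun x₁ x₂ h => by
  have := sqrt_le_sqrt (by nlinarith [theta_nonneg q] :
    theta q ^ 2 - x₂ * theta q ≤ theta q ^ 2 - x₁ * theta q)
  simp only [eliasPoint]; linarith

theorem eliasPoint_zero (q : ℕ) : eliasPoint q 0 = 0 := by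
  simp [eliasPoint, sqrt_sq (theta_nonneg q)]

theorem eliasPoint_pos (hq : 2 ≤ q) (hx : 0 < x) : 0 < eliasPoint q x := by
  have hθ := theta_pos hq
  have : √(theta q ^ 2 - x * theta q) < theta q := (sqrt_lt' hθ).2 (by nlinarith)
  simp only [eliasPoint]; linarith

theorem eliasPoint_le_theta (q : ℕ) (x : ℝ) : eliasPoint q x ≤ theta q := by
  simp only [eliasPoint]; linarith [sqrt_nonneg (theta q ^ 2 - x * theta q)]

theorem eliasPoint_lt_theta (hq : 2 ≤ q) (hx : x < theta q) : eliasPoint q x < theta q := by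
  have : 0 < √(theta q ^ 2 - x * theta q) := sqrt_pos.2 (by nlinarith [theta_pos hq])
  simp only [eliasPoint]; linarith

theorem eliasPoint_crossover (hq : 2 ≤ q) : eliasPoint q (crossover q) = 1 / q := by
  have hq' : (2 : ℝ) ≤ q := by exact_mod_cast hq
  have hsq : theta q ^ 2 - crossover q * theta q = ((q - 2) / q) ^ 2 := by
    rw [theta_eq (by omega), crossover]
    have : (q : ℝ) - 1 ≠ 0 := by linarith
    field_simp; ring
  rw [eliasPoint, hsq, sqrt_sq (div_nonneg (by linarith) (by linarith)), theta_eq (by omega)]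
  field_simp; ring

theorem crossover_pos (hq : 2 ≤ q) : 0 < crossover q := by
  have hq' : (2 : ℝ) ≤ q := by exact_mod_cast hq
  exact div_pos (by linarith) (by nlinarith)

theorem crossover_lt_theta (hq : 3 ≤ q) : crossover q < theta q := by
  have hq' : (3 : ℝ) ≤ q := by exact_mod_cast hq
  rw [crossover, theta_eq (by omega), div_lt_div_iff₀ (by nlinarith) (by linarith)]
  nlinarith [mul_pos (show (0 : ℝ) < q by linarith) (show (0 : ℝ) < (q - 2) ^ 2 by nlinarith)]

theorem hasDerivAt_eliasPoint (hq : 2 ≤ q) (hx : x < theta q) :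
    HasDerivAt (eliasPoint q) (theta q / (2 * (theta q - eliasPoint q x))) x := by
  have harg : theta q ^ 2 - x * theta q ≠ 0 := by nlinarith [theta_pos hq]
  have hd := ((((hasDerivAt_id' x).mul_const (theta q)).const_sub (theta q ^ 2)).sqrt
    harg).const_sub (theta q)
  exact hd.congr_deriv (by rw [eliasPoint, sub_sub_cancel]; ring)

end EliasPoint

section EliasDeriv

variable {q : ℕ} {x y : ℝ}

noncomputable def oddsRatio (q : ℕ) (y : ℝ) : ℝ := (q - 1) * (1 - y) / y

noncomputable def eliasDeriv (q : ℕ) (x : ℝ) : ℝ :=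
  -eliasDerivProfile q (oddsRatio q (eliasPoint q x)) / (2 * log q)

theorem qEntropyDeriv_eq_log_oddsRatio (hq : q ≠ 1) (h0 : 0 < y) (h1 : y < 1) :
    qEntropyDeriv q y = log (oddsRatio q y) / log q := by
  have hq1 : (q : ℝ) - 1 ≠ 0 := sub_ne_zero.2 (by exact_mod_cast hq)
  rw [qEntropyDeriv, oddsRatio, log_div (mul_ne_zero hq1 (by linarith)) h0.ne',
    log_mul hq1 (by linarith)]

theorem theta_mul_oddsRatio_sub_one (hq : q ≠ 0) (hy : y ≠ 0) :
    theta q * (oddsRatio q y - 1) = (theta q - y) * (oddsRatio q y + q - 1) := by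
  rw [theta_eq hq, oddsRatio]
  field_simp
  ring

theorem one_lt_oddsRatio (hq : 2 ≤ q) (h0 : 0 < y) (h : y < theta q) : 1 < oddsRatio q y := by
  rw [theta_eq (by omega)] at h
  rw [oddsRatio, one_lt_div h0]
  rw [lt_div_iff₀ (by positivity)] at h
  linarith

theorem hasDerivAt_eliasBranch (hq : 2 ≤ q) (hx0 : 0 < x) (hx : x < theta q) :
    HasDerivAt (eliasBranch q) (eliasDeriv q x) x := by
  set y := eliasPoint q x with hy
  have hy0 : 0 < y := eliasPoint_pos hq hx0
  have hyθ : y < theta q := eliasPoint_lt_theta hq hx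
  have hy1 : y < 1 := (eliasPoint_le_theta q x).trans_lt (theta_lt_one (by omega))
  have hq' : (2 : ℝ) ≤ q := by exact_mod_cast hq
  have ht1 : oddsRatio q y - 1 ≠ 0 := (sub_pos.2 (one_lt_oddsRatio hq hy0 hyθ)).ne'
  have hid := theta_mul_oddsRatio_sub_one (q := q) (by omega) hy0.ne'
  have hd := ((hasDerivAt_qEntropy (q := q) (by omega) hy0 hy1).comp x
    (hasDerivAt_eliasPoint hq hx)).const_sub 1
  refine hd.congr_deriv ?_
  rw [eliasDeriv, eliasDerivProfile, ← hy,
    qEntropyDeriv_eq_log_oddsRatio (q := q) (by omega) hy0 hy1]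
  have hlog : log q ≠ 0 := (log_pos (by linarith)).ne'
  have hyθ' : theta q - y ≠ 0 := by linarith
  field_simp
  linear_combination -log (oddsRatio q y) * hid

theorem oddsRatio_le_oddsRatio (hq : 1 ≤ q) (h0 : 0 < y) {y' : ℝ} (h : y ≤ y') :
    oddsRatio q y' ≤ oddsRatio q y := by
  have hq' : (1 : ℝ) ≤ q := by exact_mod_cast hq
  rw [oddsRatio, oddsRatio, div_le_div_iff₀ (h0.trans_le h) h0]
  nlinarith [mul_le_mul_of_nonneg_left h (sub_nonneg.2 hq')]

theorem oddsRatio_inv (hq : q ≠ 0) : oddsRatio q (1 / q) = (q - 1) ^ 2 := by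
  rw [oddsRatio]
  field_simp

theorem monotoneOn_eliasDeriv (hq : 3 ≤ q) : MonotoneOn (eliasDeriv q) (Ioc 0 (crossover q)) := by
  intro x₁ hx₁ x₂ hx₂ h
  have hq' : (3 : ℝ) ≤ q := by exact_mod_cast hq
  have hy₁ := eliasPoint_pos (by omega) hx₁.1 (q := q)
  have hy : eliasPoint q x₁ ≤ eliasPoint q x₂ := monotone_eliasPoint q h
  have hy₂ : eliasPoint q x₂ ≤ 1 / q := eliasPoint_crossover (q := q) (by omega) ▸
    monotone_eliasPoint q hx₂.2
  have ht₂ : (q - 1 : ℝ) ^ 2 ≤ oddsRatio q (eliasPoint q x₂) :=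
    oddsRatio_inv (q := q) (by omega) ▸ oddsRatio_le_oddsRatio (by omega) (hy₁.trans_le hy) hy₂
  have ht : oddsRatio q (eliasPoint q x₂) ≤ oddsRatio q (eliasPoint q x₁) :=
    oddsRatio_le_oddsRatio (by omega) hy₁ hy
  have hprof := monotoneOn_eliasDerivProfile (Q := q) (by linarith) ht₂ (ht₂.trans ht) ht
  have hlog : 0 < 2 * log q := by have := log_pos (by linarith : (1 : ℝ) < q); linarith
  exact div_le_div_of_nonneg_right (neg_le_neg hprof) hlog.le

theorem qEntropy_inv (hq : 2 ≤ q) :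
    qEntropy q (1 / q) = 1 - (q - 2) * log (q - 1) / (q * log q) := by
  have hq' : (2 : ℝ) ≤ q := by exact_mod_cast hq
  have hlog : log q ≠ 0 := (log_pos (by linarith)).ne'
  have h₁ : ((q : ℝ) - 1) / (1 / q) = q * (q - 1) := by field_simp
  have h₂ : 1 / (1 - 1 / (q : ℝ)) = q / (q - 1) := by
    have : (q : ℝ) - 1 ≠ 0 := by linarith
    field_simp
  rw [qEntropy, h₁, h₂, logb, logb, log_mul (by positivity) (by linarith),
    log_div (by positivity) (by linarith)]
  field_simp
  ring

theorem eliasDeriv_crossover (hq : 3 ≤ q) : eliasDeriv q (crossover q) = -plotkinSlope q := by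
  have hq' : (3 : ℝ) ≤ q := by exact_mod_cast hq
  have hlog : log q ≠ 0 := (log_pos (by linarith)).ne'
  have h2 : (q : ℝ) - 2 ≠ 0 := by linarith
  have hsq : ((q : ℝ) - 1) ^ 2 - 1 ≠ 0 := by nlinarith
  rw [eliasDeriv, eliasPoint_crossover (by omega), oddsRatio_inv (by omega), eliasDerivProfile,
    plotkinSlope, log_pow, logb]
  field_simp
  ring

theorem eliasBranch_crossover (hq : 3 ≤ q) :
    eliasBranch q (crossover q) = plotkinLine q (crossover q) := by
  have hq' : (3 : ℝ) ≤ q := by exact_mod_cast hq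
  have hlog : log q ≠ 0 := (log_pos (by linarith)).ne'
  have h1 : (q : ℝ) - 1 ≠ 0 := by linarith
  have h2 : (q : ℝ) - 2 ≠ 0 := by linarith
  rw [eliasBranch, plotkinLine, eliasPoint_crossover (by omega), qEntropy_inv (by omega),
    theta_eq (by omega), crossover, plotkinSlope, logb]
  field_simp
  ring

theorem continuous_eliasPoint (q : ℕ) : Continuous (eliasPoint q) := by
  unfold eliasPoint; fun_prop

theorem continuousOn_eliasDeriv (hq : 2 ≤ q) : ContinuousOn (eliasDeriv q) (Ioo 0 (theta q)) := by
  intro x hx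
  have hy0 := eliasPoint_pos hq hx.1 (q := q)
  have ht1 := one_lt_oddsRatio hq hy0 (eliasPoint_lt_theta hq hx.2)
  have ht0 : oddsRatio q (eliasPoint q x) ≠ 0 := (zero_lt_one.trans ht1).ne'
  have ht1' : oddsRatio q (eliasPoint q x) - 1 ≠ 0 := by linarith
  have hy0' : eliasPoint q x ≠ 0 := hy0.ne'
  have hc := (continuous_eliasPoint q).continuousAt (x := x)
  refine ContinuousAt.continuousWithinAt ?_
  unfold eliasDeriv eliasDerivProfile oddsRatio at *
  fun_prop (disch := assumption)

end EliasDeriv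

section AlphaEP

variable {q : ℕ} {x : ℝ}

noncomputable def alphaEPDeriv (q : ℕ) (x : ℝ) : ℝ :=
  if x ≤ crossover q then eliasDeriv q x else -plotkinSlope q

theorem hasDerivAt_plotkinLine (q : ℕ) (x : ℝ) : HasDerivAt (plotkinLine q) (-plotkinSlope q) x :=
  (((hasDerivAt_id' x).const_sub (theta q)).mul_const (plotkinSlope q)).congr_deriv (by ring)

theorem continuous_alphaEP (hq : 3 ≤ q) : Continuous (alphaEP q) := by
  rw [alphaEP_eq_ite]
  refine Continuous.if_le ?_ ?_ continuous_id continuous_const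
    fun x hx => hx ▸ eliasBranch_crossover hq
  · exact continuous_const.sub ((continuous_qEntropy (by omega)).comp (continuous_eliasPoint q))
  · unfold plotkinLine; fun_prop

theorem hasDerivAt_alphaEP (hq : 3 ≤ q) (hx : x ∈ Ioo 0 (theta q)) :
    HasDerivAt (alphaEP q) (alphaEPDeriv q x) x := by
  rw [alphaEP_eq_ite]
  exact hasDerivAt_ite_le
    (fun z hz => hasDerivAt_eliasBranch (by omega) hz.1 (hz.2.trans_lt (crossover_lt_theta hq)))
    (fun z _ => hasDerivAt_plotkinLine q z) (eliasBranch_crossover hq) (eliasDeriv_crossover hq) hx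

theorem convexOn_alphaEP (hq : 3 ≤ q) : ConvexOn ℝ (Icc 0 (theta q)) (alphaEP q) :=
  convexOn_Icc_of_hasDerivAt_of_monotoneOn (continuous_alphaEP hq).continuousOn
    (fun _ hx => hasDerivAt_alphaEP hq hx)
    (monotoneOn_ite_le (monotoneOn_eliasDeriv hq) monotoneOn_const (eliasDeriv_crossover hq).le)

theorem contDiffOn_alphaEP (hq : 3 ≤ q) : ContDiffOn ℝ 1 (alphaEP q) (Ioo 0 (theta q)) := by
  refine contDiffOn_one_of_hasDerivAt isOpen_Ioo (fun _ hx => hasDerivAt_alphaEP hq hx) ?_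
  refine continuousOn_ite_le ((continuousOn_eliasDeriv (by omega)).mono ?_) continuousOn_const
    (eliasDeriv_crossover hq)
  exact Ioc_subset_Ioo_right (crossover_lt_theta hq)

theorem alphaEP_le_one_sub_div_theta (hq : 3 ≤ q) (hx : x ∈ Icc 0 (theta q)) :
    alphaEP q x ≤ 1 - x / theta q := by
  have hθ := theta_pos (q := q) (by omega)
  have h0 : alphaEP q 0 = 1 := by
    rw [alphaEP_eq_ite]
    simp [(crossover_pos (q := q) (by omega)).le, eliasBranch, eliasPoint_zero, qEntropy_zero]
  have hθ' : alphaEP q (theta q) = 0 := by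
    rw [alphaEP_eq_ite]
    simp [not_le.2 (crossover_lt_theta hq), plotkinLine]
  have hsum : (1 - x / theta q) + x / theta q = 1 := by ring
  have h := (convexOn_alphaEP hq).2 (left_mem_Icc.2 hθ.le) (right_mem_Icc.2 hθ.le)
    (sub_nonneg.2 ((div_le_one hθ).2 hx.2)) (div_nonneg hx.1 hθ.le) hsum
  simp only [smul_eq_mul, h0, hθ', mul_zero, add_zero, mul_one, zero_add] at h
  rwa [div_mul_cancel₀ x hθ.ne'] at h

end AlphaEP

section PlotkinGap

variable {q : ℕ} {x y : ℝ}

noncomputable def plotkinGap (q : ℕ) (y : ℝ) : ℝ :=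
  1 - qEntropy q y - plotkinCoeff q * (theta q - y) ^ 2

noncomputable def plotkinGapDeriv (q : ℕ) (y : ℝ) : ℝ :=
  -qEntropyDeriv q y + 2 * plotkinCoeff q * (theta q - y)

theorem plotkinSlope_eq (hq : q ≠ 0) : plotkinSlope q = plotkinCoeff q * theta q := by
  rw [plotkinSlope, plotkinCoeff, theta_eq hq, logb]
  field_simp

theorem eliasBranch_sub_plotkinLine (hq : q ≠ 0) (hx : x ≤ theta q) :
    eliasBranch q x - plotkinLine q x = plotkinGap q (eliasPoint q x) := by
  rw [eliasBranch, plotkinLine, plotkinGap, plotkinSlope_eq hq, sq_theta_sub_eliasPoint hx]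
  ring

theorem hasDerivAt_plotkinGap (hq : q ≠ 1) (h0 : 0 < y) (h1 : y < 1) :
    HasDerivAt (plotkinGap q) (plotkinGapDeriv q y) y := by
  have hd := ((hasDerivAt_qEntropy hq h0 h1).const_sub 1).sub
    ((((hasDerivAt_id' y).const_sub (theta q)).pow 2).const_mul (plotkinCoeff q))
  exact hd.congr_deriv (by simp only [plotkinGapDeriv]; push_cast; ring)

theorem hasDerivAt_plotkinGapDeriv (h0 : 0 < y) (h1 : y < 1) :
    HasDerivAt (plotkinGapDeriv q) (1 / (y * (1 - y)) / log q - 2 * plotkinCoeff q) y := by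
  have hd := (hasDerivAt_qEntropyDeriv q h0 h1).neg.add
    (((hasDerivAt_id' y).const_sub (theta q)).const_mul (2 * plotkinCoeff q))
  exact hd.congr_deriv (by ring)

theorem qEntropy_theta (hq : 2 ≤ q) : qEntropy q (theta q) = 1 := by
  have hq' : (2 : ℝ) ≤ q := by exact_mod_cast hq
  have hlog : log q ≠ 0 := (log_pos (by linarith)).ne'
  have h₁ : ((q : ℝ) - 1) / ((q - 1) / q) = q := by
    have : (q : ℝ) - 1 ≠ 0 := by linarith
    field_simp
  have h₂ : 1 / (1 - ((q : ℝ) - 1) / q) = q := by field_simp; ring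
  rw [qEntropy, theta_eq (by omega), h₁, h₂, logb_self_eq_one (by linarith)]
  ring

theorem qEntropyDeriv_theta (hq : 2 ≤ q) : qEntropyDeriv q (theta q) = 0 := by
  have hq' : (2 : ℝ) ≤ q := by exact_mod_cast hq
  rw [qEntropyDeriv, theta_eq (by omega), show 1 - ((q : ℝ) - 1) / q = 1 / q by field_simp; ring,
    one_div, log_inv, log_div (by linarith) (by linarith)]
  ring

theorem qEntropyDeriv_inv (hq : 2 ≤ q) : qEntropyDeriv q (1 / q) = 2 * log (q - 1) / log q := by
  have hq' : (2 : ℝ) ≤ q := by exact_mod_cast hq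
  rw [qEntropyDeriv, show 1 - 1 / (q : ℝ) = (q - 1) / q by field_simp,
    log_div (by linarith) (by linarith), one_div, log_inv]
  ring

theorem plotkinGap_inv (hq : 3 ≤ q) : plotkinGap q (1 / q) = 0 := by
  have hq' : (3 : ℝ) ≤ q := by exact_mod_cast hq
  have hlog : log q ≠ 0 := (log_pos (by linarith)).ne'
  have h2 : (q : ℝ) - 2 ≠ 0 := by linarith
  rw [plotkinGap, qEntropy_inv (by omega), plotkinCoeff, theta_eq (by omega)]
  field_simp
  ring

theorem plotkinGapDeriv_inv (hq : 3 ≤ q) : plotkinGapDeriv q (1 / q) = 0 := by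
  have hq' : (3 : ℝ) ≤ q := by exact_mod_cast hq
  have hlog : log q ≠ 0 := (log_pos (by linarith)).ne'
  have h2 : (q : ℝ) - 2 ≠ 0 := by linarith
  rw [plotkinGapDeriv, qEntropyDeriv_inv (by omega), plotkinCoeff, theta_eq (by omega)]
  field_simp
  ring

theorem plotkinGap_theta (hq : 2 ≤ q) : plotkinGap q (theta q) = 0 := by
  simp [plotkinGap, qEntropy_theta hq]

theorem plotkinGapDeriv_theta (hq : 2 ≤ q) : plotkinGapDeriv q (theta q) = 0 := by
  simp [plotkinGapDeriv, qEntropyDeriv_theta hq]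

theorem plotkinGapDeriv2_nonneg_iff (hq : 3 ≤ q) (h0 : 0 < y) (h1 : y < 1) :
    0 ≤ 1 / (y * (1 - y)) / log q - 2 * plotkinCoeff q ↔
      y * (1 - y) ≤ (q - 2) / (2 * q * log (q - 1)) := by
  have hq' : (3 : ℝ) ≤ q := by exact_mod_cast hq
  have hlog : 0 < log q := log_pos (by linarith)
  have hlog' : 0 < log (q - 1) := log_pos (by linarith)
  have hy : 0 < y * (1 - y) := mul_pos h0 (by linarith)
  have : 1 / (y * (1 - y)) / log q - 2 * plotkinCoeff q =
      ((q - 2) - 2 * q * log (q - 1) * (y * (1 - y))) / (y * (1 - y) * ((q - 2) * log q)) := by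
    have : (q : ℝ) - 2 ≠ 0 := by linarith
    have : 1 - y ≠ 0 := by linarith
    rw [plotkinCoeff]
    field_simp
  rw [this, le_div_iff₀ (mul_pos hy (mul_pos (by linarith) hlog)), zero_mul, sub_nonneg,
    ← le_div_iff₀' (mul_pos (by positivity) hlog')]

theorem inv_mul_one_sub_inv_le (hq : 3 ≤ q) :
    1 / q * (1 - 1 / q) ≤ ((q : ℝ) - 2) / (2 * q * log (q - 1)) := by
  have hq' : (3 : ℝ) ≤ q := by exact_mod_cast hq
  have hlog' : 0 < log (q - 1) := log_pos (by linarith)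
  have h := two_mul_log_le_sub_inv (s := (q : ℝ) - 1) (by linarith)
  have h' : 2 * (q - 1) * log (q - 1) ≤ q * (q - 2) := by
    have : ((q : ℝ) - 1) * (((q : ℝ) - 1) - ((q : ℝ) - 1)⁻¹) = q * (q - 2) := by
      have : (q : ℝ) - 1 ≠ 0 := by linarith
      field_simp; ring
    nlinarith
  rw [show 1 / (q : ℝ) * (1 - 1 / q) = (q - 1) / q ^ 2 by field_simp,
    div_le_div_iff₀ (by positivity) (by positivity)]
  nlinarith

theorem plotkinGap_nonneg (hq : 3 ≤ q) (hy : y ∈ Icc (1 / (q : ℝ)) (theta q)) :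
    0 ≤ plotkinGap q y := by
  have hq' : (3 : ℝ) ≤ q := by exact_mod_cast hq
  -- `F'' ≥ 0` exactly where `y (1 - y) ≤ m`, i.e. outside `(1/2 - w, 1/2 + w)`; for `m ≥ 1/4`
  -- the junk value `√(1/4 - m) = 0` makes the middle interval empty.
  set m := ((q : ℝ) - 2) / (2 * q * log (q - 1))
  set w := √(1 / 4 - m)
  have hq0 : (0 : ℝ) < 1 / q := by positivity
  have hq2 : 1 / (q : ℝ) ≤ 1 / 2 := by gcongr; linarith
  have hw : w ≤ 1 / 2 - 1 / q := (sqrt_le_left (by linarith)).2 (by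
    nlinarith [inv_mul_one_sub_inv_le hq])
  have hw0 : 0 ≤ w := sqrt_nonneg _
  have hθ : theta q = 1 - 1 / q := rfl
  have hunit {z : ℝ} (hz : z ∈ Icc (1 / (q : ℝ)) (theta q)) : 0 < z ∧ z < 1 :=
    ⟨by linarith [hz.1], by linarith [hz.2]⟩
  refine nonneg_of_deriv2_nonneg_nonpos_nonneg (y₁ := 1 / 2 - w) (y₂ := 1 / 2 + w)
    (by linarith) (by linarith) (by linarith)
    (fun z hz => hasDerivAt_plotkinGap (by omega) (hunit hz).1 (hunit hz).2)
    (fun z hz => hasDerivAt_plotkinGapDeriv (hunit hz).1 (hunit hz).2) ?_ ?_ ?_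
    (plotkinGap_inv hq).ge (plotkinGapDeriv_inv hq).ge (plotkinGap_theta (by omega)).ge
    (plotkinGapDeriv_theta (by omega)).le y hy
  · intro z hz
    refine (plotkinGapDeriv2_nonneg_iff hq (by linarith [hz.1]) (by linarith [hz.2])).2
      (mul_one_sub_le_of_sqrt_le_abs (le_abs.2 (Or.inr (by linarith [hz.2]))))
  · intro z hz
    refine le_of_lt (not_le.1 fun h => ?_)
    have := (plotkinGapDeriv2_nonneg_iff hq (by linarith [hz.1]) (by linarith [hz.2])).1 h
    exact (not_lt.2 this) (lt_mul_one_sub_of_abs_lt_sqrt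
      (abs_sub_lt_iff.2 ⟨by linarith [hz.2], by linarith [hz.1]⟩))
  · intro z hz
    refine (plotkinGapDeriv2_nonneg_iff hq (by linarith [hz.1]) (by linarith [hz.2])).2
      (mul_one_sub_le_of_sqrt_le_abs (le_abs.2 (Or.inl (by linarith [hz.1]))))

theorem alphaEP_le_alphaE (hq : 3 ≤ q) (hx : x ∈ Icc 0 (theta q)) : alphaEP q x ≤ alphaE q x := by
  rw [alphaE_eq_eliasBranch, alphaEP_eq_ite]
  dsimp only
  split_ifs with hxc
  · exact le_rfl
  · have hy : eliasPoint q x ∈ Icc (1 / (q : ℝ)) (theta q) :=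
      ⟨eliasPoint_crossover (q := q) (by omega) ▸ monotone_eliasPoint q (not_le.1 hxc).le,
        eliasPoint_le_theta q x⟩
    have := plotkinGap_nonneg hq hy
    rw [← eliasBranch_sub_plotkinLine (by omega) hx.2] at this
    linarith

end PlotkinGap

end EliasPlotkin

theorem stmt3 (q : ℕ) (hq : 3 ≤ q) :
    ConvexOn ℝ (Set.Icc (0 : ℝ) (1 - 1 / (q : ℝ))) (alphaEP q) ∧
    ContDiffOn ℝ 1 (alphaEP q) (Set.Ioo (0 : ℝ) (1 - 1 / (q : ℝ))) ∧
    (∀ x ∈ Set.Icc (0 : ℝ) (1 - 1 / (q : ℝ)), alphaEP q x ≤ alphaE q x) ∧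
    (∀ x ∈ Set.Icc (0 : ℝ) (1 - 1 / (q : ℝ)),
      alphaEP q x ≤ 1 - x / (1 - 1 / (q : ℝ))) :=
  ⟨EliasPlotkin.convexOn_alphaEP hq, EliasPlotkin.contDiffOn_alphaEP hq,
    fun _ hx => EliasPlotkin.alphaEP_le_alphaE hq hx,
    fun _ hx => EliasPlotkin.alphaEP_le_one_sub_div_theta hq hx⟩
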